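/- Suppose no two colluding agents are adjacent in G, fix a colluding agent x_0 ∈ C and a target t_0 ∉ C with t_0 ≠ x_0, and let β be the broadcast with β(x,t) = ρ*(x,t) for all (x,t) ≠ (x_0,t_0) and 1 ≤ β(x_0,t_0) < ρ*(x_0,t_0). Then β is not admissible: broadcasting strictly below ρ* necessarily causes a routing cycle, so some ordered pair of distinct vertices has no corresponding path. -/

import Mathlib

open SimpleGraph

namespace Intercept

variable {V : Type*}

/-- The perceived-distance vectors after `s` rounds of the synchronization protocol.
Colluding agents (members of `C`) always broadcast `β`; honest agents start with
`0`/`∞` and update by the distance-vector rule. -/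
noncomputable def perceived [Fintype V] [DecidableEq V] (G : SimpleGraph V)
    (C : Finset V) (β : V → V → ℕ∞) : ℕ → V → V → ℕ∞
  | 0 => fun i j => if i ∈ C then β i j else if i = j then 0 else ⊤
  | s + 1 => fun i j =>
      if i ∈ C then β i j
      else min (perceived G C β s i j)
        (1 + ⨅ k ∈ G.neighborSet i, perceived G C β s k j)

/-- The stationary perceived distances `ρ = ρ^n`. -/
noncomputable def rho [Fintype V] [DecidableEq V] (G : SimpleGraph V)
    (C : Finset V) (β : V → V → ℕ∞) : V → V → ℕ∞ :=
  perceived G C β (Fintype.card V)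

/-- `k ∈ b(i,t)`:  `k` is a neighbor of `i` minimizing the (stationary) perceived
distance `ρ(·,t)` among all neighbors of `i`; only defined (satisfiable) for `i ≠ t`. -/
def inForwardSet (G : SimpleGraph V) (ρ : V → V → ℕ∞) (i t k : V) : Prop :=
  i ≠ t ∧ G.Adj i k ∧ ∀ k', G.Adj i k' → ρ k t ≤ ρ k' t

/-- A corresponding path from `s` to `t`: a walk in `G` such that every honest vertex
forwards to a member of its forwarding set `b(·,t)`. -/
def IsCorrPath [Fintype V] [DecidableEq V] (G : SimpleGraph V) (C : Finset V)
    (β : V → V → ℕ∞) (s t : V) (ℓ : ℕ) (v : ℕ → V) : Prop :=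
  v 0 = s ∧ v ℓ = t ∧ (∀ i < ℓ, G.Adj (v i) (v (i + 1))) ∧
    ∀ i < ℓ, v i ∉ C → inForwardSet G (rho G C β) (v i) t (v (i + 1))

/-- A broadcast is admissible if between every ordered pair of distinct vertices
there is a corresponding path. -/
def Admissible [Fintype V] [DecidableEq V] (G : SimpleGraph V) (C : Finset V)
    (β : V → V → ℕ∞) : Prop :=
  ∀ s t : V, s ≠ t → ∃ ℓ v, IsCorrPath G C β s t ℓ v

/-- The pair `(s,t)` is captured if every corresponding path from `s` to `t`
contains a colluding vertex. -/
def Captured [Fintype V] [DecidableEq V] (G : SimpleGraph V) (C : Finset V)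
    (β : V → V → ℕ∞) (s t : V) : Prop :=
  ∀ ℓ v, IsCorrPath G C β s t ℓ v → ∃ i ≤ ℓ, v i ∈ C

/-- `N(C,β)`: the number of captured ordered pairs of distinct vertices. -/
noncomputable def numCaptured [Fintype V] [DecidableEq V] (G : SimpleGraph V)
    (C : Finset V) (β : V → V → ℕ∞) : ℕ :=
  Set.ncard {p : V × V | p.1 ≠ p.2 ∧ Captured G C β p.1 p.2}

/-- The `j`-th colluding distance `d_j(x,y)`: the least total length of a sequence of
`j` distinct colluding vertices starting at `x` and ending at `y`, measured by summing
the graph distances of consecutive members (`⊤` if no such sequence exists). -/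
noncomputable def collDist (G : SimpleGraph V) (C : Finset V) (j : ℕ) (x y : V) : ℕ∞ :=
  ⨅ (σ : ℕ → V) (_ : σ 0 = x ∧ σ (j - 1) = y ∧ (∀ i < j, σ i ∈ C) ∧
      ∀ a < j, ∀ b < j, σ a = σ b → a = b),
    ∑ i ∈ Finset.range (j - 1), (G.dist (σ i) (σ (i + 1)) : ℕ∞)

/-- `ρ'(x,t) = max (d(x,t) - 2) 1`. -/
noncomputable def rhoPrime (G : SimpleGraph V) (x t : V) : ℕ∞ :=
  max ((G.dist x t : ℕ∞) - 2) 1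

/-- `ρ''(x,t)`: the minimum over colluders `y` and `1 ≤ j ≤ |C|` of
`d_j(x,y) - 2(j-1) + ρ'(y,t)`. -/
noncomputable def rhoPrime2 (G : SimpleGraph V) (C : Finset V) (x t : V) : ℕ∞ :=
  ⨅ y ∈ C, ⨅ j ∈ Finset.Icc 1 C.card,
    (collDist G C j x y - ((2 * (j - 1) : ℕ) : ℕ∞) + rhoPrime G y t)

/-- The optimal separated broadcast `ρ*(x,t) = min (ρ'(x,t)) (ρ''(x,t))`,
with `ρ*(x,x) = 0`. -/
noncomputable def rhoStar [DecidableEq V] (G : SimpleGraph V) (C : Finset V)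
    (x t : V) : ℕ∞ :=
  if x = t then 0 else min (rhoPrime G x t) (rhoPrime2 G C x t)

/-- A colluder `x` is proper for target `t` if `ρ*(x,t) < ρ'(x,t)`. -/
def Proper [DecidableEq V] (G : SimpleGraph V) (C : Finset V) (x t : V) : Prop :=
  rhoStar G C x t < rhoPrime G x t

open scoped Classical in
/-- The forwarding number of `x` for `t`: the least `j ≥ 1` such that
`ρ*(x,t) = d_j(x,y) - 2(j-1) + ρ'(y,t)` for some colluder `y`, improper
vertices being assigned forwarding number `1`. -/
noncomputable def fwdNum [DecidableEq V] (G : SimpleGraph V) (C : Finset V)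
    (x t : V) : ℕ :=
  if Proper G C x t then
    sInf {j : ℕ | 1 ≤ j ∧ ∃ y ∈ C, rhoStar G C x t =
      collDist G C j x y - ((2 * (j - 1) : ℕ) : ℕ∞) + rhoPrime G y t}
  else 1

/-!
Write `m = β x₀ t₀`. From `1 ≤ m < ρ'(x₀,t₀)` the target is at distance at least `m + 3` from
`x₀`. Extending an optimal chain of another colluder `c` by `x₀` (or cutting it at `x₀`) gives
`ρ''(x₀,t) + 2 ≤ d(x₀,c) + ρ*(c,t)`, so `m < ρ''(x₀,t₀)` yields `m + 3 ≤ d(x₀,c) + β(c,t₀)`.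
Perceived distances to `t` are at least `min (d(w,t)) (min_c (d(w,c) + β(c,t)))`, because this
function is below `β` on colluders, vanishes at `t` and grows by at most one along edges. Hence
every `w ≠ x₀` within distance `2` of `x₀` perceives `t₀` strictly farther than `x₀` does: the
(honest) neighbours of `x₀` forward traffic for `t₀` back to `x₀`, and no corresponding path from
`x₀` ever leaves the closed neighbourhood of `x₀`, which does not contain `t₀`.
-/

section Perceived

variable [Fintype V] [DecidableEq V] {G : SimpleGraph V} {C : Finset V} {β : V → V → ℕ∞}

lemma perceived_of_mem (s : ℕ) {i : V} (hi : i ∈ C) (j : V) :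
    perceived G C β s i j = β i j := by
  cases s <;> simp [perceived, hi]

lemma rho_of_mem {i : V} (hi : i ∈ C) (j : V) : rho G C β i j = β i j :=
  perceived_of_mem _ hi j

lemma le_perceived {t : V} {f : V → ℕ∞} (hC : ∀ c ∈ C, f c ≤ β c t) (ht : f t = 0)
    (hadj : ∀ i k, G.Adj i k → f i ≤ 1 + f k) (s : ℕ) (i : V) :
    f i ≤ perceived G C β s i t := by
  induction s generalizing i with
  | zero =>
    by_cases hi : i ∈ C
    · simpa [perceived, hi] using hC i hi
    · by_cases hit : i = t <;> simp [perceived, hi, hit, ht]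
  | succ s ih =>
    by_cases hi : i ∈ C
    · rw [perceived_of_mem _ hi]
      exact hC i hi
    · simp only [perceived, hi, if_false]
      refine le_min (ih i) ?_
      rw [ENat.add_iInf₂]
      exact le_iInf₂ fun k hk => (hadj i k hk).trans (add_le_add le_rfl (ih k))

lemma min_dist_le_perceived (t : V) (s : ℕ) (i : V) :
    min (G.dist i t : ℕ∞) (⨅ c ∈ C, (G.dist i c : ℕ∞) + β c t) ≤ perceived G C β s i t := by
  refine le_perceived (f := fun i => min (G.dist i t : ℕ∞) (⨅ c ∈ C, (G.dist i c : ℕ∞) + β c t))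
    (fun c hc => ?_) (by simp) (fun i k hik => ?_) s i
  · exact (min_le_right _ _).trans ((iInf₂_le c hc).trans (by simp))
  · have hdist : ∀ u, (G.dist i u : ℕ∞) ≤ 1 + G.dist k u := fun u => by
      have := hik.reachable.dist_triangle_left u
      rw [dist_eq_one_iff_adj.2 hik] at this
      exact_mod_cast this
    rw [← min_add_add_left, ENat.add_iInf₂]
    refine min_le_min (hdist t) (iInf₂_mono fun c _ => ?_)
    rw [← add_assoc]
    exact add_le_add_left (hdist c) _

end Perceived

section Chains

variable {G : SimpleGraph V} {C : Finset V}

def IsCollChain (C : Finset V) (j : ℕ) (x y : V) (σ : ℕ → V) : Prop :=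
  σ 0 = x ∧ σ (j - 1) = y ∧ (∀ i < j, σ i ∈ C) ∧ ∀ a < j, ∀ b < j, σ a = σ b → a = b

/-- On a chain of pairwise non-adjacent colluders every step has length at least `2`, so this
is the term `d_j - 2(j-1)` of `ρ''` evaluated on the chain, without truncation. -/
noncomputable def chainExcess (G : SimpleGraph V) (j : ℕ) (σ : ℕ → V) : ℕ :=
  ∑ i ∈ Finset.range (j - 1), (G.dist (σ i) (σ (i + 1)) - 2)

lemma two_le_dist_of_mem (hG : G.Connected) (hsep : ∀ x ∈ C, ∀ y ∈ C, ¬ G.Adj x y)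
    {x y : V} (hx : x ∈ C) (hy : y ∈ C) (hxy : x ≠ y) : 2 ≤ G.dist x y :=
  hG.one_lt_dist_of_ne_of_not_adj hxy (hsep x hx y hy)

namespace IsCollChain

variable {j : ℕ} {x y : V} {σ : ℕ → V}

lemma card_le (h : IsCollChain C j x y σ) : j ≤ C.card := by
  classical
  obtain ⟨-, -, hmem, hinj⟩ := h
  calc j = ((Finset.range j).image σ).card := by
        rw [Finset.card_image_of_injOn fun a ha b hb => hinj a (by simpa using ha) b
          (by simpa using hb), Finset.card_range]
    _ ≤ C.card := Finset.card_le_card fun z hz => by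
        obtain ⟨i, hi, rfl⟩ := Finset.mem_image.1 hz
        exact hmem i (Finset.mem_range.1 hi)

lemma sum_dist_eq (hG : G.Connected) (hsep : ∀ x ∈ C, ∀ y ∈ C, ¬ G.Adj x y)
    (h : IsCollChain C j x y σ) :
    ∑ i ∈ Finset.range (j - 1), G.dist (σ i) (σ (i + 1)) = chainExcess G j σ + 2 * (j - 1) := by
  obtain ⟨-, -, hmem, hinj⟩ := h
  calc ∑ i ∈ Finset.range (j - 1), G.dist (σ i) (σ (i + 1))
      = ∑ i ∈ Finset.range (j - 1), (G.dist (σ i) (σ (i + 1)) - 2 + 2) := by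
        refine Finset.sum_congr rfl fun i hi => ?_
        have hi := Finset.mem_range.1 hi
        have hne : σ i ≠ σ (i + 1) := fun he => by
          have := hinj i (by omega) (i + 1) (by omega) he
          omega
        have := two_le_dist_of_mem hG hsep (hmem i (by omega)) (hmem (i + 1) (by omega)) hne
        omega
    _ = chainExcess G j σ + 2 * (j - 1) := by
        rw [Finset.sum_add_distrib, Finset.sum_const, Finset.card_range, smul_eq_mul, mul_comm]
        rfl

lemma singleton {c : V} (hc : c ∈ C) : IsCollChain C 1 c c fun _ => c :=
  ⟨rfl, rfl, fun _ _ => hc, fun a ha b hb _ => by omega⟩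

lemma drop (h : IsCollChain C j x y σ) {p : ℕ} (hp : p < j) :
    IsCollChain C (j - p) (σ p) y fun i => σ (p + i) := by
  obtain ⟨-, hy, hmem, hinj⟩ := h
  refine ⟨rfl, show σ (p + (j - p - 1)) = y by rw [← hy]; congr 1; omega,
    fun i hi => hmem _ (by omega), fun a ha b hb he => ?_⟩
  have := hinj _ (by omega) _ (by omega) he
  omega

lemma cons (h : IsCollChain C j x y σ) (hj : 1 ≤ j) {w : V} (hw : w ∈ C)
    (hwσ : ∀ i < j, σ i ≠ w) : IsCollChain C (j + 1) w y (Stream'.cons w σ) := by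
  obtain ⟨-, hy, hmem, hinj⟩ := h
  refine ⟨rfl, ?_, fun i hi => ?_, fun a ha b hb he => ?_⟩
  · obtain ⟨j, rfl⟩ : ∃ k, j = k + 1 := ⟨j - 1, by omega⟩
    exact hy
  · rcases i with _ | i
    exacts [hw, hmem i (by omega)]
  · rcases a with _ | a <;> rcases b with _ | b
    · rfl
    · exact absurd he.symm (hwσ b (by omega))
    · exact absurd he (hwσ a (by omega))
    · have := hinj a (by omega) b (by omega) he
      omega

end IsCollChain

lemma chainExcess_drop_le (σ : ℕ → V) {j p : ℕ} (hp : p < j) :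
    chainExcess G (j - p) (fun i => σ (p + i)) ≤ chainExcess G j σ := by
  have hj : j - 1 = p + (j - p - 1) := by omega
  unfold chainExcess
  rw [hj, Finset.sum_range_add]
  simp only [add_assoc]
  exact Nat.le_add_left _ _

lemma chainExcess_cons (σ : ℕ → V) {j : ℕ} (hj : 1 ≤ j) (w : V) :
    chainExcess G (j + 1) (Stream'.cons w σ) = G.dist w (σ 0) - 2 + chainExcess G j σ := by
  obtain ⟨j, rfl⟩ : ∃ k, j = k + 1 := ⟨j - 1, by omega⟩
  unfold chainExcess
  rw [Nat.add_sub_cancel, Finset.sum_range_succ', add_comm]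
  rfl

lemma collDist_sub_le_chainExcess (hG : G.Connected) (hsep : ∀ x ∈ C, ∀ y ∈ C, ¬ G.Adj x y)
    {j : ℕ} {x y : V} {σ : ℕ → V} (h : IsCollChain C j x y σ) :
    collDist G C j x y - ((2 * (j - 1) : ℕ) : ℕ∞) ≤ chainExcess G j σ := by
  refine tsub_le_iff_right.2 ((iInf₂_le σ h).trans_eq ?_)
  rw [← Nat.cast_sum, h.sum_dist_eq hG hsep, Nat.cast_add]

lemma exists_chainExcess_le_collDist_sub (hG : G.Connected)
    (hsep : ∀ x ∈ C, ∀ y ∈ C, ¬ G.Adj x y) {j : ℕ} {x y : V} (htop : collDist G C j x y ≠ ⊤) :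
    ∃ σ, IsCollChain C j x y σ ∧
      (chainExcess G j σ : ℕ∞) ≤ collDist G C j x y - ((2 * (j - 1) : ℕ) : ℕ∞) := by
  have hlt := (ENat.lt_add_one_iff htop).2 le_rfl
  obtain ⟨σ, hσ⟩ := iInf_lt_iff.1 hlt
  obtain ⟨h, hsum⟩ := iInf_lt_iff.1 hσ
  refine ⟨σ, h, ENat.le_sub_of_add_le_right (ENat.natCast_ne_top _) ?_⟩
  rw [← Nat.cast_add, ← IsCollChain.sum_dist_eq hG hsep h, Nat.cast_sum]
  exact (ENat.lt_add_one_iff htop).1 hsum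

end Chains

section RhoStar

variable {G : SimpleGraph V} {C : Finset V}

lemma rhoPrime2_le_chainExcess_add (hG : G.Connected) (hsep : ∀ x ∈ C, ∀ y ∈ C, ¬ G.Adj x y)
    {j : ℕ} {x y : V} {σ : ℕ → V} (h : IsCollChain C j x y σ) (hj : 1 ≤ j) (t : V) :
    rhoPrime2 G C x t ≤ chainExcess G j σ + rhoPrime G y t := by
  have hy : y ∈ C := h.2.1 ▸ h.2.2.1 (j - 1) (by omega)
  calc rhoPrime2 G C x t
      ≤ collDist G C j x y - ((2 * (j - 1) : ℕ) : ℕ∞) + rhoPrime G y t :=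
        (iInf₂_le y hy).trans (iInf₂_le j (Finset.mem_Icc.2 ⟨hj, h.card_le⟩))
    _ ≤ chainExcess G j σ + rhoPrime G y t :=
        add_le_add_left (collDist_sub_le_chainExcess hG hsep h) _

lemma IsCollChain.exists_isCollChain_from (hG : G.Connected)
    (hsep : ∀ x ∈ C, ∀ y ∈ C, ¬ G.Adj x y)
    {j : ℕ} {x c y : V} {σ : ℕ → V} (h : IsCollChain C j c y σ) (hx : x ∈ C) (hxc : x ≠ c)
    (hj : 1 ≤ j) :
    ∃ j' τ, 1 ≤ j' ∧ IsCollChain C j' x y τ ∧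
      chainExcess G j' τ + 2 ≤ G.dist x c + chainExcess G j σ := by
  have hd := two_le_dist_of_mem hG hsep hx (h.1 ▸ h.2.2.1 0 (by omega)) hxc
  by_cases hxσ : ∃ p < j, σ p = x
  · obtain ⟨p, hp, rfl⟩ := hxσ
    refine ⟨j - p, _, by omega, h.drop hp, ?_⟩
    have := chainExcess_drop_le (G := G) σ hp
    omega
  · push Not at hxσ
    refine ⟨j + 1, _, by omega, h.cons hj hx hxσ, ?_⟩
    rw [chainExcess_cons σ hj, h.1]
    omega

lemma rhoPrime2_add_two_le_of_isCollChain (hG : G.Connected)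
    (hsep : ∀ x ∈ C, ∀ y ∈ C, ¬ G.Adj x y) {j : ℕ} {x c y : V} {σ : ℕ → V}
    (h : IsCollChain C j c y σ) (hx : x ∈ C) (hxc : x ≠ c) (hj : 1 ≤ j) (t : V) :
    rhoPrime2 G C x t + 2 ≤ G.dist x c + chainExcess G j σ + rhoPrime G y t := by
  obtain ⟨j', τ, hj', hτ, hle⟩ := h.exists_isCollChain_from hG hsep hx hxc hj
  calc rhoPrime2 G C x t + 2 ≤ chainExcess G j' τ + rhoPrime G y t + 2 :=
        add_le_add_left (rhoPrime2_le_chainExcess_add hG hsep hτ hj' t) 2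
    _ = ((chainExcess G j' τ + 2 : ℕ) : ℕ∞) + rhoPrime G y t := by push_cast; ring
    _ ≤ ((G.dist x c + chainExcess G j σ : ℕ) : ℕ∞) + rhoPrime G y t := by gcongr
    _ = G.dist x c + chainExcess G j σ + rhoPrime G y t := by push_cast; rfl

lemma rhoPrime2_add_two_le [DecidableEq V] (hG : G.Connected)
    (hsep : ∀ x ∈ C, ∀ y ∈ C, ¬ G.Adj x y) {x c t : V} (hx : x ∈ C) (hc : c ∈ C) (hxc : x ≠ c)
    (hct : c ≠ t) : rhoPrime2 G C x t + 2 ≤ G.dist x c + rhoStar G C c t := by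
  rw [rhoStar, if_neg hct, ← min_add_add_left]
  refine le_min ?_ ?_
  · simpa [chainExcess] using
      rhoPrime2_add_two_le_of_isCollChain hG hsep (IsCollChain.singleton hc) hx hxc le_rfl t
  · simp only [rhoPrime2, ENat.add_iInf]
    refine le_iInf₂ fun y _ => le_iInf₂ fun j hj => ?_
    by_cases htop : collDist G C j c y = ⊤
    · rw [htop, ENat.top_sub_natCast, top_add, add_top]
      exact le_top
    obtain ⟨σ, hσ, hle⟩ := exists_chainExcess_le_collDist_sub hG hsep htop
    calc rhoPrime2 G C x t + 2 ≤ G.dist x c + chainExcess G j σ + rhoPrime G y t :=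
          rhoPrime2_add_two_le_of_isCollChain hG hsep hσ hx hxc (Finset.mem_Icc.1 hj).1 t
      _ ≤ _ := by rw [add_assoc]; gcongr

lemma add_three_le_dist_of_lt_rhoPrime {m : ℕ∞} {x t : V} (hm : 1 ≤ m)
    (h : m < rhoPrime G x t) : m + 3 ≤ G.dist x t := by
  rcases lt_max_iff.1 h with h | h
  · calc m + 3 = m + 2 + 1 := by ring
      _ ≤ G.dist x t := Order.add_one_le_of_lt (lt_tsub_iff_right.1 h)
  · exact absurd hm (not_le.2 h)

end RhoStar

section Trap

variable [Fintype V] [DecidableEq V] {G : SimpleGraph V} {C : Finset V} {β : V → V → ℕ∞}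

lemma add_one_le_of_add_three_le {m a b : ℕ∞} (h : m + 3 ≤ a) (hab : a ≤ 2 + b) :
    m + 1 ≤ b := by
  rw [← ENat.add_le_add_iff_left (k := 2) (by simp)]
  calc 2 + (m + 1) = m + 3 := by ring
    _ ≤ 2 + b := h.trans hab

lemma lt_rho_of_dist_le_two (hG : G.Connected) {x t w : V} (hdist : β x t + 3 ≤ G.dist x t)
    (hcoll : ∀ c ∈ C, c ≠ x → β x t + 3 ≤ G.dist x c + β c t) (hwx : w ≠ x)
    (hxw : G.dist x w ≤ 2) : β x t < rho G C β w t := by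
  have hβ : β x t ≠ ⊤ := ne_top_of_le_ne_top (ENat.natCast_ne_top _) (le_self_add.trans hdist)
  have hvia : ∀ u, (G.dist x u : ℕ∞) ≤ 2 + G.dist w u := fun u => by
    have := hG.dist_triangle (u := x) (v := w) (w := u)
    exact_mod_cast this.trans (by omega)
  refine (ENat.add_one_le_iff hβ).1 (le_trans ?_ (min_dist_le_perceived t _ w))
  refine le_min (add_one_le_of_add_three_le hdist (hvia t)) (le_iInf₂ fun c hc => ?_)
  by_cases hcx : c = x
  · subst hcx
    rw [add_comm]
    gcongr
    exact_mod_cast hG.pos_dist_of_ne hwx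
  · refine add_one_le_of_add_three_le (hcoll c hc hcx) ?_
    rw [← add_assoc]
    gcongr
    exact hvia c

lemma IsCorrPath.eq_or_adj_of_trapped {x t : V} {ℓ : ℕ} {v : ℕ → V}
    (hv : IsCorrPath G C β x t ℓ v) (hnbr : ∀ u, G.Adj x u → u ∉ C)
    (htrap : ∀ w, w ≠ x → G.dist x w ≤ 2 → rho G C β x t < rho G C β w t) :
    t = x ∨ G.Adj x t := by
  obtain ⟨hv0, hvℓ, hadj, hfwd⟩ := hv
  suffices h : ∀ i ≤ ℓ, v i = x ∨ G.Adj x (v i) from hvℓ ▸ h ℓ le_rfl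
  intro i hi
  induction i with
  | zero => exact Or.inl hv0
  | succ i ih =>
    rcases ih (by omega) with hvi | hxv
    · exact Or.inr (hvi ▸ hadj i (by omega))
    · by_contra! hne
      have hmin := (hfwd i (by omega) (hnbr _ hxv)).2.2 x hxv.symm
      have hd : G.dist x (v (i + 1)) ≤ 2 := by
        have := hxv.reachable.dist_triangle_left (v (i + 1))
        rwa [dist_eq_one_iff_adj.2 hxv, dist_eq_one_iff_adj.2 (hadj i (by omega))] at this
      exact (htrap _ hne.1 hd).not_ge hmin

end Trap

theorem below_rhoStar_not_admissible_general [Fintype V] [DecidableEq V] (G : SimpleGraph V)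
    (hG : G.Connected) (C : Finset V)
    (hsep : ∀ x ∈ C, ∀ y ∈ C, ¬ G.Adj x y)
    (x₀ : V) (hx₀ : x₀ ∈ C) (t₀ : V) (ht₀ : t₀ ∉ C) (ht₀x : t₀ ≠ x₀)
    (β : V → V → ℕ∞)
    (hβ : ∀ x t : V, ¬(x = x₀ ∧ t = t₀) → β x t = rhoStar G C x t)
    (hβ1 : 1 ≤ β x₀ t₀) (hβlt : β x₀ t₀ < rhoStar G C x₀ t₀) :
    ¬ Admissible G C β := by
  intro hadm
  rw [rhoStar, if_neg ht₀x.symm, lt_min_iff] at hβlt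
  have hdist : β x₀ t₀ + 3 ≤ G.dist x₀ t₀ := add_three_le_dist_of_lt_rhoPrime hβ1 hβlt.1
  have hcoll : ∀ c ∈ C, c ≠ x₀ → β x₀ t₀ + 3 ≤ G.dist x₀ c + β c t₀ := fun c hc hcx => by
    rw [hβ c t₀ fun h => hcx h.1]
    calc β x₀ t₀ + 3 = β x₀ t₀ + 1 + 2 := by ring
      _ ≤ rhoPrime2 G C x₀ t₀ + 2 := by gcongr; exact Order.add_one_le_of_lt hβlt.2
      _ ≤ _ := rhoPrime2_add_two_le hG hsep hx₀ hc (Ne.symm hcx) (ne_of_mem_of_not_mem hc ht₀)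
  have htrap : ∀ w, w ≠ x₀ → G.dist x₀ w ≤ 2 → rho G C β x₀ t₀ < rho G C β w t₀ :=
    fun w hw hxw => (rho_of_mem hx₀ t₀).symm ▸ lt_rho_of_dist_le_two hG hdist hcoll hw hxw
  obtain ⟨ℓ, v, hv⟩ := hadm x₀ t₀ ht₀x.symm
  rcases hv.eq_or_adj_of_trapped (fun u hu huC => hsep x₀ hx₀ u huC hu) htrap with h | h
  · exact ht₀x h
  · rw [dist_eq_one_iff_adj.2 h] at hdist
    have := (add_le_add_left hβ1 3).trans hdist
    norm_num at this

/-- Broadcasting strictly below `ρ*` necessarily causes a routing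
cycle: if `β` agrees with `ρ*` except that `1 ≤ β x₀ t₀ < ρ*(x₀,t₀)` for some
colluder `x₀` and honest target `t₀`, then `β` is not admissible. -/
theorem below_rhoStar_not_admissible [Fintype V] [DecidableEq V] (G : SimpleGraph V)
    (hG : G.Connected) (hn : 2 ≤ Fintype.card V) (C : Finset V)
    (hsep : ∀ x ∈ C, ∀ y ∈ C, ¬ G.Adj x y)
    (x₀ : V) (hx₀ : x₀ ∈ C) (t₀ : V) (ht₀ : t₀ ∉ C) (ht₀x : t₀ ≠ x₀)
    (β : V → V → ℕ∞)
    (hβ : ∀ x t : V, ¬(x = x₀ ∧ t = t₀) → β x t = rhoStar G C x t)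
    (hβ1 : 1 ≤ β x₀ t₀) (hβlt : β x₀ t₀ < rhoStar G C x₀ t₀) :
    ¬ Admissible G C β :=
  below_rhoStar_not_admissible_general G hG C hsep x₀ hx₀ t₀ ht₀ ht₀x β hβ hβ1 hβlt

end Intercept
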